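/- Assume the simultaneous Doeblin condition and fix α ∈ (0,1). Let x ∈ S satisfy J*(λ,x) = min_{y∈S} J*(λ,y), and suppose π ∈ 𝒫 is ε-optimal at x where ε ∈ (0, ξ). Then there exists a policy δ ∈ 𝒫* such that P_x^π = P_x^δ, i.e., the distribution of the state–action process {(X_t,A_t)} starting at x under π coincides with that under δ. -/

import Mathlib

/-!
Since `x` minimizes `J*` and `π` is `ε`-optimal at `x` with `ε` below the smallest gap `ξ₁` between
distinct values of `J*`, every state `y` that `π` reaches from `x` with positive probability
still has `J*(y) = J*(x)`: the continuation of `π` from `y` costs at most `J*(x) + ε`. Hence every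
action `π` plays on its support leads only to such states, i.e. lies in `B*`. Off the support the
choice is free, and `B*(s) ≠ ∅` for every `s`: an action charged by a nearly optimal policy at `s`
cannot lead to larger values of `J*` (again by the gap), and no action leads only to smaller
values, by the one-step inequality `J*(s) ≤ max {J*(y) : p_{sy}(a) > 0}`. So `δ` follows `π` on
its support and a selector of `B*` elsewhere.
-/

open scoped Classical BigOperators ENNReal

namespace RiskSensitive

/-- A (history-dependent, randomized) policy for a finite MDP: given the past
(chronological list of (state, action) pairs) and the current state, it assigns a
probability weight to each action, concentrated on the admissible actions. -/
structure Policy (S A : Type*) [Fintype S] [Fintype A] (Adm : S → Finset A) where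
  toFun : List (S × A) → S → A → ℝ
  nonneg : ∀ h s a, 0 ≤ toFun h s a
  sum_one : ∀ h s, ∑ a, toFun h s a = 1
  supp : ∀ h s a, a ∉ Adm s → toFun h s a = 0

variable {S A : Type*} [Fintype S] [Fintype A]
variable (Adm : S → Finset A) (p : S → A → S → ℝ) (C : S → A → ℝ) (lam : ℝ)

/-- Probability of a finite trajectory (list of (action, next-state) pairs), given the
history so far and the current state. -/
noncomputable def pathProbAux (π : Policy S A Adm) :
    List (S × A) → S → List (A × S) → ℝ
  | _, _, [] => 1
  | hist, x, (a, y) :: rest =>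
      π.toFun hist x a * p x a y * pathProbAux π (hist ++ [(x, a)]) y rest

/-- `pathProb π x l` is `P_x^π[A_0 = a_0, X_1 = y_1, …]` for `l = [(a_0,y_1),…]`. -/
noncomputable def pathProb (π : Policy S A Adm) (x : S) (l : List (A × S)) : ℝ :=
  pathProbAux Adm p π [] x l

/-- Probability of a cylinder event depending on the first `n` (action, next-state) pairs. -/
noncomputable def cylProb (π : Policy S A Adm) (x : S) (n : ℕ)
    (E : (Fin n → A × S) → Prop) : ℝ :=
  ∑ v : Fin n → A × S, if E v then pathProb Adm p π x (List.ofFn v) else 0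

/-- The state `X_t` along the trajectory encoded by `l`, starting from `x`. -/
def stateAt (x : S) (l : List (A × S)) (t : ℕ) : S :=
  (l.take t).foldl (fun _ q => q.2) x

/-- The final state of the finite trajectory `l` started at `x`. -/
def lastState (x : S) (l : List (A × S)) : S :=
  l.foldl (fun _ q => q.2) x

/-- `Σ_t w(X_t, A_t)` along the finite trajectory `l` started at `x`. -/
def costSum (w : S → A → ℝ) : S → List (A × S) → ℝ
  | _, [] => 0
  | x, (a, y) :: rest => w x a + costSum w y rest

/-- `J_n(λ,π,x) = (1/λ) log E_x^π[exp(λ Σ_{t<n} C(X_t,A_t))]`. -/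
noncomputable def Jn (π : Policy S A Adm) (x : S) (n : ℕ) : ℝ :=
  (1 / lam) * Real.log (∑ v : Fin n → A × S,
    pathProb Adm p π x (List.ofFn v) * Real.exp (lam * costSum C x (List.ofFn v)))

/-- The risk-sensitive average cost `J(λ,π,x) = limsup_n J_n(λ,π,x)/n`. -/
noncomputable def Javg (π : Policy S A Adm) (x : S) : ℝ :=
  Filter.limsup (fun n : ℕ => Jn Adm p C lam π x n / n) Filter.atTop

/-- Optimal risk-sensitive average cost `J*(λ,x)`. -/
noncomputable def Jopt (x : S) : ℝ :=
  ⨅ π : Policy S A Adm, Javg Adm p C lam π x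

/-- `π` is `ε`-optimal at `x`. -/
def EpsOptimalAt (π : Policy S A Adm) (x : S) (ε : ℝ) : Prop :=
  Javg Adm p C lam π x ≤ Jopt Adm p C lam x + ε

/-- `FirstExit Q v` : the trajectory `v` leaves `{Q}` for the first time exactly at its
last step, i.e. the exit time of `Q` equals `n`. -/
def FirstExit (Q : S → Prop) {n : ℕ} (v : Fin n → A × S) : Prop :=
  0 < n ∧ (∀ t : Fin n, (t : ℕ) + 1 < n → Q (v t).2) ∧
    ∀ t : Fin n, (t : ℕ) + 1 = n → ¬ Q (v t).2

/-- `E_x^π[ exp(Σ_{t<τ} w(X_t,A_t)) ]` where `τ = min{n ≥ 1 : ¬ Q (X_n)}` is the first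
exit time from `Q` (the contribution of `[τ = ∞]` is null when `τ < ∞` a.s.). -/
noncomputable def EexitExp (π : Policy S A Adm) (x : S) (Q : S → Prop)
    (w : S → A → ℝ) : ℝ≥0∞ :=
  ∑' n : ℕ, ∑ v : Fin n → A × S,
    if FirstExit Q v then
      ENNReal.ofReal (pathProb Adm p π x (List.ofFn v) *
        Real.exp (costSum w x (List.ofFn v)))
    else 0

/-- `E_x^π[ exp(Σ_{t<T} w(X_t,A_t)) ]` with `T` the first positive arrival time to `z`. -/
noncomputable def EhitExp (π : Policy S A Adm) (x z : S) (w : S → A → ℝ) : ℝ≥0∞ :=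
  EexitExp Adm p π x (fun y => y ≠ z) w

/-- `E_x^π[T]`, the expected first positive arrival time to `z`, computed as
`Σ_{n≥0} P_x^π[T > n]`. -/
noncomputable def ExpT (π : Policy S A Adm) (x z : S) : ℝ≥0∞ :=
  ∑' n : ℕ, ENNReal.ofReal
    (cylProb Adm p π x n (fun v => ∀ t : Fin n, (v t).2 ≠ z))

/-- `P_x^π[T > n]`, the probability that `z` is not visited during the first `n` steps. -/
noncomputable def survProb (π : Policy S A Adm) (x z : S) (n : ℕ) : ℝ :=
  cylProb Adm p π x n (fun v => ∀ t : Fin n, (v t).2 ≠ z)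

/-- The stationary policy induced by a choice function `f ∈ 𝔽`. -/
noncomputable def stationary (f : S → A) (hf : ∀ s, f s ∈ Adm s) : Policy S A Adm where
  toFun := fun _ s a => if a = f s then 1 else 0
  nonneg := by intro h s a; split <;> norm_num
  sum_one := by intro h s; simp
  supp := by
    intro h s a ha
    rw [if_neg]
    intro hEq
    exact ha (hEq ▸ hf s)

/-- The simultaneous Doeblin condition: `E_x^f[T] ≤ M` for every state `x` and every
stationary policy `f`, where `T` is the first positive arrival time to `z`. -/
def Doeblin (z : S) (M : ℝ) : Prop :=
  0 < M ∧ ∀ (x : S) (f : S → A) (hf : ∀ s, f s ∈ Adm s),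
    ExpT Adm p (stationary Adm f hf) x z ≤ ENNReal.ofReal M

/-- `B_g(x) = {a ∈ A(x) : g(x) = max{g(y) : p_{xy}(a) > 0}}`. -/
def Bg (g : S → ℝ) (x : S) : Set A :=
  {a | a ∈ Adm x ∧ g x = sSup (g '' {y | 0 < p x a y})}

/-- The family `𝒢` of functions characterizing `J*(λ,·)`. -/
def Gclass : Set (S → ℝ) :=
  {g | (∀ x, g x = sInf ((fun a => sSup (g '' {y | 0 < p x a y})) '' (Adm x : Set A))) ∧
    ∃ h : S → ℝ, ∀ x,
      sInf ((fun a => Real.exp (lam * C x a) * ∑ y, p x a y * Real.exp (lam * h y)) ''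
        Bg Adm p g x) ≤ Real.exp (lam * g x + lam * h x)}

/-- The class `𝒫*` of policies which always select actions in `B*(X_t)`. -/
def Pstar : Set (Policy S A Adm) :=
  {π | ∀ (x : S) (t : ℕ),
    cylProb Adm p π x (t + 1)
      (fun v => (v (Fin.last t)).1 ∈
        Bg Adm p (Jopt Adm p C lam) (stateAt x (List.ofFn v) t)) = 1}

/-- The deviation function
`h(x) = inf_{π ∈ 𝒫*} (1/λ) log E_x^π[exp(λα Σ_{t<T}(C(X_t,A_t) − J*(λ,X_t)))]`. -/
noncomputable def hdev (z : S) (α : ℝ) (x : S) : EReal :=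
  ⨅ π ∈ Pstar Adm p C lam, ((lam⁻¹ : ℝ) : EReal) *
    ENNReal.log (EhitExp Adm p π x z
      (fun s a => lam * α * (C s a - Jopt Adm p C lam s)))

/-- `ψ(ε) = (1/λ) inf_{δ∈𝒫*} log E_z^δ[exp(λ Σ_{t<T}(C(X_t,A_t) − γ₀ − 2ε))]`. -/
noncomputable def psi (z : S) (ε : ℝ) : EReal :=
  ((lam⁻¹ : ℝ) : EReal) * ⨅ π ∈ Pstar Adm p C lam,
    ENNReal.log (EhitExp Adm p π z z
      (fun s a => lam * (C s a - Jopt Adm p C lam z - 2 * ε)))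

/-- `ξ₀ = −(1−α) log β / (λα)`. -/
noncomputable def xi0 (α β : ℝ) : ℝ := -((1 - α) * Real.log β) / (lam * α)

/-- `ξ₁`: 1 if `J*(λ,·)` is constant, otherwise the minimum gap between distinct
values of `J*(λ,·)`. -/
noncomputable def xi1 : ℝ :=
  if ∀ u v : S, Jopt Adm p C lam u = Jopt Adm p C lam v then 1
  else sInf {d | ∃ u v : S, Jopt Adm p C lam u < Jopt Adm p C lam v ∧
    d = Jopt Adm p C lam v - Jopt Adm p C lam u}

/-- `ξ = min{ξ₀, ξ₁}`. -/
noncomputable def xi (α β : ℝ) : ℝ := min (xi0 lam α β) (xi1 Adm p C lam)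

/-- The shifted policy obtained by prefixing the fixed history `pre`. -/
def shiftPolicy (π : Policy S A Adm) (pre : List (S × A)) : Policy S A Adm where
  toFun := fun h s a => π.toFun (pre ++ h) s a
  nonneg := fun h s a => π.nonneg _ s a
  sum_one := fun h s => π.sum_one _ s
  supp := fun h s a ha => π.supp _ s a ha

/-- The history (list of (state, action) pairs) along the trajectory `l` started at `x`. -/
def histOf : S → List (A × S) → List (S × A)
  | _, [] => []
  | x, (a, y) :: rest => (x, a) :: histOf y rest


open Filter

theorem abs_div_natCast_le {u : ℕ → ℝ} {K : ℝ} (hu : ∀ n, |u n| ≤ K * n) (n : ℕ) :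
    |u n / n| ≤ K := by
  rcases Nat.eq_zero_or_pos n with rfl | hn
  · simpa using (abs_nonneg (u 1)).trans (by simpa using hu 1)
  · rw [abs_div, Nat.abs_cast, div_le_iff₀ (by exact_mod_cast hn)]
    exact hu n

theorem isBoundedUnder_le_div {u : ℕ → ℝ} {K : ℝ} (hu : ∀ n, |u n| ≤ K * n) :
    IsBoundedUnder (· ≤ ·) atTop fun n => u n / n :=
  isBoundedUnder_of ⟨K, fun n => (abs_le.1 (abs_div_natCast_le hu n)).2⟩

theorem isBoundedUnder_ge_div {u : ℕ → ℝ} {K : ℝ} (hu : ∀ n, |u n| ≤ K * n) :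
    IsBoundedUnder (· ≥ ·) atTop fun n => u n / n :=
  isBoundedUnder_of ⟨-K, fun n => (abs_le.1 (abs_div_natCast_le hu n)).1⟩

theorem limsup_div_le_of_le_add {u v : ℕ → ℝ} {K c : ℝ} {k m : ℕ}
    (hu : ∀ n, |u n| ≤ K * n) (hv : ∀ n, |v n| ≤ K * n)
    (h : ∀ n, v (n + k) ≤ c + u (n + m)) :
    limsup (fun n => v n / n) atTop ≤ limsup (fun n => u n / n) atTop := by
  set L := limsup (fun n => u n / n) atTop
  have hv_shift : IsBoundedUnder (· ≥ ·) atTop fun n => v (n + k) / ↑(n + k) :=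
    isBoundedUnder_of ⟨-K, fun n => (abs_le.1 (abs_div_natCast_le hv (n + k))).1⟩
  rw [← limsup_nat_add _ k]
  refine le_of_forall_pos_le_add fun η hη => limsup_le_of_le hv_shift.isCoboundedUnder_le ?_
  have hu_ev : ∀ᶠ n in atTop, u n ≤ (L + η / 2) * n := by
    filter_upwards [eventually_lt_of_limsup_lt (show L < L + η / 2 by linarith)
      (isBoundedUnder_le_div hu), eventually_gt_atTop 0] with n hn hn0
    exact ((div_lt_iff₀ (by exact_mod_cast hn0)).1 hn).le
  have hlin : Tendsto (fun n : ℕ => η / 2 * n) atTop atTop :=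
    tendsto_natCast_atTop_atTop.const_mul_atTop (by positivity)
  filter_upwards [(tendsto_add_atTop_nat m).eventually hu_ev,
    hlin.eventually_ge_atTop (c + (L + η / 2) * m - (L + η) * k),
    eventually_gt_atTop 0] with n hun hn hn0
  rw [div_le_iff₀ (by positivity)]
  have := h n
  push_cast at hun ⊢
  linarith

omit [Fintype S] [Fintype A] in
theorem lastState_concat (x : S) (l : List (A × S)) (q : A × S) :
    lastState x (l ++ [q]) = q.2 := by
  simp [lastState]

omit [Fintype S] [Fintype A] in
theorem histOf_concat (x : S) (l : List (A × S)) (q : A × S) :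
    histOf x (l ++ [q]) = histOf x l ++ [(lastState x l, q.1)] := by
  induction l generalizing x with
  | nil => rfl
  | cons r l ih => simp [histOf, ih, lastState]

omit [Fintype S] [Fintype A] in
theorem stateAt_append_of_length_eq (x : S) {l : List (A × S)} {t : ℕ} (hl : l.length = t)
    (l' : List (A × S)) : stateAt x (l ++ l') t = lastState x l := by
  simp [stateAt, lastState, ← hl]

omit [Fintype S] [Fintype A] in
theorem abs_costSum_le {w : S → A → ℝ} {K : ℝ} (hK : ∀ s a, |w s a| ≤ K) (x : S)
    (l : List (A × S)) : |costSum w x l| ≤ l.length * K := by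
  induction l generalizing x with
  | nil => simp [costSum]
  | cons q l ih =>
    calc |w x q.1 + costSum w q.2 l| ≤ K + l.length * K :=
          (abs_add_le _ _).trans (add_le_add (hK _ _) (ih _))
      _ = (q :: l).length * K := by rw [List.length_cons]; push_cast; ring

def IsStochastic : Prop :=
  ∀ (x : S), ∀ a ∈ Adm x, (∀ y, 0 ≤ p x a y) ∧ ∑ y, p x a y = 1

noncomputable def expCost (π : Policy S A Adm) (x : S) (n : ℕ) : ℝ :=
  ∑ v : Fin n → A × S,
    pathProb Adm p π x (List.ofFn v) * Real.exp (lam * costSum C x (List.ofFn v))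

def IsReachable (π : Policy S A Adm) (x : S) (h : List (S × A)) (s : S) : Prop :=
  ∃ l, histOf x l = h ∧ lastState x l = s ∧ pathProb Adm p π x l ≠ 0

section Paths

variable {Adm p C lam}

theorem Policy.mem_of_toFun_ne_zero (π : Policy S A Adm) {h : List (S × A)} {s : S} {a : A}
    (ha : π.toFun h s a ≠ 0) : a ∈ Adm s := by
  by_contra hs
  exact ha (π.supp h s a hs)

theorem IsStochastic.toFun_mul_nonneg (hp : IsStochastic Adm p) (π : Policy S A Adm)
    (h : List (S × A)) (s : S) (a : A) (y : S) : 0 ≤ π.toFun h s a * p s a y := by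
  by_cases ha : π.toFun h s a = 0
  · simp [ha]
  · exact mul_nonneg (π.nonneg h s a) ((hp s a (π.mem_of_toFun_ne_zero ha)).1 y)

omit [Fintype A] in
theorem IsStochastic.exists_pos (hp : IsStochastic Adm p) {s : S} {a : A} (ha : a ∈ Adm s) :
    ∃ y, 0 < p s a y := by
  by_contra! h
  have := Finset.sum_eq_zero fun y (_ : y ∈ Finset.univ) => (h y).antisymm ((hp s a ha).1 y)
  exact one_ne_zero ((hp s a ha).2.symm.trans this)

theorem pathProbAux_nonneg (hp : IsStochastic Adm p) (π : Policy S A Adm) (h : List (S × A))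
    (x : S) (l : List (A × S)) : 0 ≤ pathProbAux Adm p π h x l := by
  induction l generalizing h x with
  | nil => exact zero_le_one
  | cons q l ih => exact mul_nonneg (hp.toFun_mul_nonneg π h x q.1 q.2) (ih _ _)

theorem pathProb_nonneg (hp : IsStochastic Adm p) (π : Policy S A Adm) (x : S)
    (l : List (A × S)) : 0 ≤ pathProb Adm p π x l :=
  pathProbAux_nonneg hp π [] x l

theorem pathProbAux_append_hist (π : Policy S A Adm) (pre h : List (S × A)) (x : S)
    (l : List (A × S)) :
    pathProbAux Adm p π (pre ++ h) x l = pathProbAux Adm p (shiftPolicy Adm π pre) h x l := by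
  induction l generalizing h x with
  | nil => rfl
  | cons q l ih =>
    simp only [pathProbAux, ← ih, List.append_assoc]
    rfl

theorem pathProb_shiftPolicy (π : Policy S A Adm) (pre : List (S × A)) (x : S)
    (l : List (A × S)) :
    pathProb Adm p (shiftPolicy Adm π pre) x l = pathProbAux Adm p π pre x l := by
  rw [pathProb, ← pathProbAux_append_hist, List.append_nil]

theorem shiftPolicy_shiftPolicy (π : Policy S A Adm) (h₁ h₂ : List (S × A)) :
    shiftPolicy Adm (shiftPolicy Adm π h₁) h₂ = shiftPolicy Adm π (h₁ ++ h₂) := by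
  simp [shiftPolicy, List.append_assoc]

theorem pathProbAux_concat (π : Policy S A Adm) (h : List (S × A)) (x : S)
    (l : List (A × S)) (q : A × S) :
    pathProbAux Adm p π h x (l ++ [q]) = pathProbAux Adm p π h x l *
      (π.toFun (h ++ histOf x l) (lastState x l) q.1 * p (lastState x l) q.1 q.2) := by
  induction l generalizing h x with
  | nil => simp [pathProbAux, histOf, lastState]
  | cons r l ih =>
    simp only [List.cons_append, pathProbAux, ih, histOf, List.append_assoc, List.nil_append,
      lastState, List.foldl_cons]
    ring

theorem pathProb_concat (π : Policy S A Adm) (x : S) (l : List (A × S)) (q : A × S) :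
    pathProb Adm p π x (l ++ [q]) = pathProb Adm p π x l *
      (π.toFun (histOf x l) (lastState x l) q.1 * p (lastState x l) q.1 q.2) :=
  pathProbAux_concat π [] x l q

theorem pathProbAux_congr {σ τ : Policy S A Adm} (P : List (S × A) → S → Prop)
    (hP : ∀ h x a y, P h x → σ.toFun h x a * p x a y ≠ 0 → P (h ++ [(x, a)]) y)
    (hστ : ∀ h x, P h x → σ.toFun h x = τ.toFun h x) {h : List (S × A)} {x : S}
    (hx : P h x) (l : List (A × S)) : pathProbAux Adm p σ h x l = pathProbAux Adm p τ h x l := by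
  induction l generalizing h x with
  | nil => rfl
  | cons q l ih =>
    simp only [pathProbAux, ← hστ h x hx]
    by_cases hq : σ.toFun h x q.1 * p x q.1 q.2 = 0
    · simp [hq]
    · rw [ih (hP h x q.1 q.2 hx hq)]

end Paths

section Costs

variable {Adm p C lam}

theorem expCost_succ (π : Policy S A Adm) (x : S) (n : ℕ) :
    expCost Adm p C lam π x (n + 1) = ∑ a, ∑ y, π.toFun [] x a * p x a y *
      Real.exp (lam * C x a) * expCost Adm p C lam (shiftPolicy Adm π [(x, a)]) y n := by
  rw [expCost, ← (Fin.consEquiv fun _ => A × S).sum_comp, Fintype.sum_prod_type,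
    Fintype.sum_prod_type]
  refine Finset.sum_congr rfl fun a _ => Finset.sum_congr rfl fun y _ => ?_
  rw [expCost, Finset.mul_sum]
  refine Finset.sum_congr rfl fun w _ => ?_
  simp only [Fin.consEquiv_apply, List.ofFn_succ, Fin.cons_zero, Fin.cons_succ]
  rw [pathProb, pathProbAux, costSum, List.nil_append, pathProb_shiftPolicy, mul_add,
    Real.exp_add]
  ring

theorem sum_pathProb_eq_one (hp : IsStochastic Adm p) (π : Policy S A Adm) (x : S) (n : ℕ) :
    ∑ v : Fin n → A × S, pathProb Adm p π x (List.ofFn v) = 1 := by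
  -- with zero cost, `expCost` is the total mass of the paths of length `n`
  suffices h : ∀ n (π : Policy S A Adm) x, expCost Adm p 0 0 π x n = 1 by
    simpa [expCost] using h n π x
  intro n
  induction n with
  | zero => intro π x; simp [expCost, pathProb, pathProbAux]
  | succ n ih =>
    intro π x
    simp only [expCost_succ, ih, zero_mul, Real.exp_zero, mul_one, ← Finset.mul_sum]
    rw [← π.sum_one [] x]
    refine Finset.sum_congr rfl fun a _ => ?_
    by_cases ha : a ∈ Adm x
    · rw [(hp x a ha).2, mul_one]
    · simp [π.supp [] x a ha]

theorem expCost_pos (hp : IsStochastic Adm p) (π : Policy S A Adm) (x : S) (n : ℕ) :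
    0 < expCost Adm p C lam π x n := by
  obtain ⟨v, -, hv⟩ := Finset.exists_ne_zero_of_sum_ne_zero
    ((sum_pathProb_eq_one hp π x n).symm ▸ one_ne_zero)
  refine Finset.sum_pos' (fun w _ => mul_nonneg (pathProb_nonneg hp π x _) (Real.exp_pos _).le)
    ⟨v, Finset.mem_univ v, mul_pos ((pathProb_nonneg hp π x _).lt_of_ne' hv) (Real.exp_pos _)⟩

theorem expCost_mem_Icc (hp : IsStochastic Adm p) (hlam : 0 < lam) {K : ℝ}
    (hK : ∀ s a, |C s a| ≤ K) (π : Policy S A Adm) (x : S) (n : ℕ) :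
    expCost Adm p C lam π x n ∈
      Set.Icc (Real.exp (-(lam * (K * n)))) (Real.exp (lam * (K * n))) := by
  have hcost (v : Fin n → A × S) : |lam * costSum C x (List.ofFn v)| ≤ lam * (K * n) := by
    rw [abs_mul, abs_of_pos hlam, mul_comm K]
    exact mul_le_mul_of_nonneg_left (by simpa using abs_costSum_le hK x (List.ofFn v)) hlam.le
  have hsum (c : ℝ) : Real.exp c = ∑ v : Fin n → A × S,
      pathProb Adm p π x (List.ofFn v) * Real.exp c := by
    rw [← Finset.sum_mul, sum_pathProb_eq_one hp, one_mul]
  constructor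
  · rw [hsum, expCost]
    exact Finset.sum_le_sum fun v _ => mul_le_mul_of_nonneg_left
      (Real.exp_le_exp.2 (abs_le.1 (hcost v)).1) (pathProb_nonneg hp π x _)
  · rw [hsum (lam * (K * n)), expCost]
    exact Finset.sum_le_sum fun v _ => mul_le_mul_of_nonneg_left
      (Real.exp_le_exp.2 (abs_le.1 (hcost v)).2) (pathProb_nonneg hp π x _)

theorem Jn_eq (π : Policy S A Adm) (x : S) (n : ℕ) :
    Jn Adm p C lam π x n = 1 / lam * Real.log (expCost Adm p C lam π x n) := rfl

theorem exp_mul_Jn (hp : IsStochastic Adm p) (hlam : 0 < lam) (π : Policy S A Adm) (x : S)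
    (n : ℕ) : Real.exp (lam * Jn Adm p C lam π x n) = expCost Adm p C lam π x n := by
  rw [Jn_eq, ← mul_assoc, mul_one_div_cancel hlam.ne', one_mul,
    Real.exp_log (expCost_pos hp π x n)]

theorem Jn_le_iff (hp : IsStochastic Adm p) (hlam : 0 < lam) (π : Policy S A Adm) (x : S)
    (n : ℕ) (c : ℝ) :
    Jn Adm p C lam π x n ≤ c ↔ expCost Adm p C lam π x n ≤ Real.exp (lam * c) := by
  rw [← exp_mul_Jn hp hlam, Real.exp_le_exp, mul_le_mul_iff_right₀ hlam]

theorem exists_abs_Jn_le (hp : IsStochastic Adm p) (hlam : 0 < lam) :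
    ∃ K, ∀ π x n, |Jn Adm p C lam π x n| ≤ K * n := by
  set K := ∑ q : S × A, |C q.1 q.2|
  have hK (s : S) (a : A) : |C s a| ≤ K :=
    Finset.single_le_sum (f := fun q : S × A => |C q.1 q.2|) (fun _ _ => abs_nonneg _)
      (Finset.mem_univ (s, a))
  refine ⟨K, fun π x n => abs_le.2 ⟨?_, ?_⟩⟩
  · rw [← mul_le_mul_iff_right₀ hlam, ← Real.exp_le_exp, exp_mul_Jn hp hlam, mul_neg]
    exact (expCost_mem_Icc hp hlam hK π x n).1
  · exact (Jn_le_iff hp hlam π x n _).2 (expCost_mem_Icc hp hlam hK π x n).2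

end Costs

section AverageCost

variable {Adm p C lam}

theorem bddBelow_range_Javg (hp : IsStochastic Adm p) (hlam : 0 < lam) (x : S) :
    BddBelow (Set.range fun π : Policy S A Adm => Javg Adm p C lam π x) := by
  obtain ⟨K, hK⟩ := exists_abs_Jn_le (C := C) hp hlam
  refine ⟨-K, ?_⟩
  rintro _ ⟨π, rfl⟩
  exact le_limsup_of_frequently_le
    (Frequently.of_forall fun n => (abs_le.1 (abs_div_natCast_le (hK π x) n)).1)
    (isBoundedUnder_le_div (hK π x))

theorem Jopt_le_Javg (hp : IsStochastic Adm p) (hlam : 0 < lam) (π : Policy S A Adm) (x : S) :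
    Jopt Adm p C lam x ≤ Javg Adm p C lam π x :=
  ciInf_le (bddBelow_range_Javg hp hlam x) π

theorem exists_Javg_lt (hA : ∀ x, (Adm x).Nonempty) {ε : ℝ} (hε : 0 < ε) (x : S) :
    ∃ π : Policy S A Adm, Javg Adm p C lam π x < Jopt Adm p C lam x + ε :=
  have : Nonempty (Policy S A Adm) :=
    ⟨stationary Adm (fun s => (hA s).choose) fun s => (hA s).choose_spec⟩
  exists_lt_of_ciInf_lt (lt_add_of_pos_right _ hε)

theorem Javg_shiftPolicy_le (hp : IsStochastic Adm p) (hlam : 0 < lam) (π : Policy S A Adm)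
    {x : S} {a : A} {y : S} (hay : π.toFun [] x a * p x a y ≠ 0) :
    Javg Adm p C lam (shiftPolicy Adm π [(x, a)]) y ≤ Javg Adm p C lam π x := by
  obtain ⟨K, hK⟩ := exists_abs_Jn_le (C := C) hp hlam
  set D := π.toFun [] x a * p x a y * Real.exp (lam * C x a)
  have hD : 0 < D := mul_pos ((hp.toFun_mul_nonneg π [] x a y).lt_of_ne' hay) (Real.exp_pos _)
  have hterm (b : A) (z : S) (n : ℕ) : 0 ≤ π.toFun [] x b * p x b z * Real.exp (lam * C x b) *
      expCost Adm p C lam (shiftPolicy Adm π [(x, b)]) z n :=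
    mul_nonneg (mul_nonneg (hp.toFun_mul_nonneg π [] x b z) (Real.exp_pos _).le)
      (expCost_pos hp _ z n).le
  have hZ (n : ℕ) : D * expCost Adm p C lam (shiftPolicy Adm π [(x, a)]) y n ≤
      expCost Adm p C lam π x (n + 1) := by
    rw [expCost_succ]
    exact (Finset.single_le_sum (fun z _ => hterm a z n) (Finset.mem_univ y)).trans
      (Finset.single_le_sum (fun b _ => Finset.sum_nonneg fun z _ => hterm b z n)
        (Finset.mem_univ a))
  refine limsup_div_le_of_le_add (k := 0) (m := 1) (c := -(Real.log D / lam)) (hK π x)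
    (hK _ y) fun n => ?_
  have hlog := Real.log_le_log (mul_pos hD (expCost_pos hp _ y n)) (hZ n)
  rw [Real.log_mul hD.ne' (expCost_pos hp _ y n).ne'] at hlog
  rw [Jn_eq, Jn_eq, Nat.add_zero]
  calc 1 / lam * Real.log (expCost Adm p C lam (shiftPolicy Adm π [(x, a)]) y n)
      ≤ 1 / lam * (Real.log (expCost Adm p C lam π x (n + 1)) - Real.log D) := by
        gcongr
        linarith
    _ = _ := by ring

theorem Javg_shiftPolicy_histOf_le (hp : IsStochastic Adm p) (hlam : 0 < lam)
    (π : Policy S A Adm) (x : S) {l : List (A × S)} (hl : pathProb Adm p π x l ≠ 0) :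
    Javg Adm p C lam (shiftPolicy Adm π (histOf x l)) (lastState x l) ≤
      Javg Adm p C lam π x := by
  induction l using List.reverseRecOn with
  | nil => rfl
  | append_singleton l q ih =>
    rw [pathProb_concat, mul_ne_zero_iff] at hl
    rw [histOf_concat, lastState_concat, ← shiftPolicy_shiftPolicy]
    refine (Javg_shiftPolicy_le hp hlam _ ?_).trans (ih hl.1)
    simpa [shiftPolicy] using hl.2

end AverageCost

section OneStep

variable {Adm p C lam}

/-- Play `a` at `s`; from the state `y` reached after the first step on, follow `Φ y` as if the
process had started at `y`. -/
noncomputable def Policy.cons (s : S) (a : A) (ha : a ∈ Adm s) (Φ : S → Policy S A Adm) :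
    Policy S A Adm where
  toFun
    | [], x, b => if x = s then (if b = a then 1 else 0) else (Φ x).toFun [] x b
    | [_], x, b => (Φ x).toFun [] x b
    | _ :: (y, c) :: h, x, b => (Φ y).toFun ((y, c) :: h) x b
  nonneg
    | [], x, b => by dsimp only; split_ifs <;> simp [(Φ x).nonneg]
    | [_], x, b => (Φ x).nonneg [] x b
    | _ :: (y, c) :: h, x, b => (Φ y).nonneg _ x b
  sum_one
    | [], x => by dsimp only; split_ifs <;> simp [(Φ x).sum_one]
    | [_], x => (Φ x).sum_one [] x
    | _ :: (y, c) :: h, x => (Φ y).sum_one _ x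
  supp
    | [], x, b, hb => by
      dsimp only
      split_ifs with hx hab
      · exact absurd (hab ▸ hx ▸ ha) hb
      · rfl
      · exact (Φ x).supp [] x b hb
    | [_], x, b, hb => (Φ x).supp [] x b hb
    | _ :: (y, c) :: h, x, b, hb => (Φ y).supp _ x b hb

theorem pathProb_shiftPolicy_cons (s : S) (a : A) (ha : a ∈ Adm s) (Φ : S → Policy S A Adm)
    (y : S) (l : List (A × S)) :
    pathProb Adm p (shiftPolicy Adm (Policy.cons s a ha Φ) [(s, a)]) y l =
      pathProb Adm p (Φ y) y l := by
  refine pathProbAux_congr (fun h x => (h = [] ∧ x = y) ∨ ∃ c r, h = (y, c) :: r)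
    ?_ ?_ (Or.inl ⟨rfl, rfl⟩) l
  · rintro h x b z (⟨rfl, rfl⟩ | ⟨c, r, rfl⟩) -
    · exact Or.inr ⟨b, [], rfl⟩
    · exact Or.inr ⟨c, r ++ [(x, b)], rfl⟩
  · rintro h x (⟨rfl, rfl⟩ | ⟨c, r, rfl⟩) <;> rfl

theorem Jn_cons_succ_le (hp : IsStochastic Adm p) (hlam : 0 < lam) {s : S} {a : A}
    (ha : a ∈ Adm s) (Φ : S → Policy S A Adm) {T : Finset S} (hT : T.Nonempty)
    (hsucc : ∀ y, 0 < p s a y → y ∈ T) (n : ℕ) :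
    Jn Adm p C lam (Policy.cons s a ha Φ) s (n + 1) ≤
      C s a + T.sup' hT fun y => Jn Adm p C lam (Φ y) y n := by
  set W := T.sup' hT fun y => Jn Adm p C lam (Φ y) y n
  have hfirst (b : A) : (Policy.cons s a ha Φ).toFun [] s b = if b = a then 1 else 0 := by
    simp [Policy.cons]
  rw [Jn_le_iff hp hlam, expCost_succ, Fintype.sum_eq_single a fun b hb => by simp [hfirst, hb],
    hfirst, if_pos rfl]
  simp_rw [one_mul]
  calc _ ≤ ∑ y, p s a y * Real.exp (lam * C s a) * Real.exp (lam * W) := by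
        refine Finset.sum_le_sum fun y _ => ?_
        rcases ((hp s a ha).1 y).eq_or_lt with h0 | hy
        · simp [← h0]
        · have hZ : expCost Adm p C lam (shiftPolicy Adm (Policy.cons s a ha Φ) [(s, a)]) y n =
              expCost Adm p C lam (Φ y) y n := by
            simp only [expCost, pathProb_shiftPolicy_cons]
          rw [hZ, ← exp_mul_Jn hp hlam]
          gcongr
          exact Finset.le_sup' (fun y => Jn Adm p C lam (Φ y) y n) (hsucc y hy)
    _ = Real.exp (lam * (C s a + W)) := by
        rw [← Finset.sum_mul, ← Finset.sum_mul, (hp s a ha).2, one_mul, mul_add, Real.exp_add]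

theorem exists_succ_Jopt_le_Javg (hp : IsStochastic Adm p) (hlam : 0 < lam) {s : S} {a : A}
    (ha : a ∈ Adm s) (Φ : S → Policy S A Adm) :
    ∃ y, 0 < p s a y ∧ Jopt Adm p C lam s ≤ Javg Adm p C lam (Φ y) y := by
  obtain ⟨K, hK⟩ := exists_abs_Jn_le (C := C) hp hlam
  set T := Finset.univ.filter fun y => 0 < p s a y
  have hsucc (y : S) (hy : 0 < p s a y) : y ∈ T := Finset.mem_filter.2 ⟨Finset.mem_univ y, hy⟩
  have hT : T.Nonempty := let ⟨y, hy⟩ := hp.exists_pos ha; ⟨y, hsucc y hy⟩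
  set W : ℕ → ℝ := fun n => T.sup' hT fun y => Jn Adm p C lam (Φ y) y n
  have hW (n : ℕ) : |W n| ≤ K * n := by
    have ⟨y, hy⟩ := hT
    exact abs_le.2 ⟨(abs_le.1 (hK _ y n)).1.trans
      (Finset.le_sup' (fun y => Jn Adm p C lam (Φ y) y n) hy),
      Finset.sup'_le hT _ fun y _ => (abs_le.1 (hK _ y n)).2⟩
  have hlim : limsup (fun n => W n / n) atTop = T.sup' hT fun y => Javg Adm p C lam (Φ y) y := by
    simp only [W, Finset.sup'_div₀, Nat.cast_nonneg]
    exact limsup_finset_sup' hT (fun y _ => (isBoundedUnder_ge_div (hK _ y)).isCoboundedUnder_le)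
      fun y _ => isBoundedUnder_le_div (hK _ y)
  obtain ⟨y, hyT, hy⟩ := T.exists_mem_eq_sup' hT fun y => Javg Adm p C lam (Φ y) y
  refine ⟨y, (Finset.mem_filter.1 hyT).2, ?_⟩
  calc Jopt Adm p C lam s ≤ Javg Adm p C lam (Policy.cons s a ha Φ) s := Jopt_le_Javg hp hlam _ s
    _ ≤ limsup (fun n => W n / n) atTop := limsup_div_le_of_le_add (k := 1) (m := 0) hW (hK _ s)
        fun n => Jn_cons_succ_le hp hlam ha Φ hT hsucc n
    _ = Javg Adm p C lam (Φ y) y := by rw [hlim, hy]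

theorem Jopt_le_sSup_succ (hp : IsStochastic Adm p) (hlam : 0 < lam)
    (hA : ∀ x, (Adm x).Nonempty) {s : S} {a : A} (ha : a ∈ Adm s) :
    Jopt Adm p C lam s ≤ sSup (Jopt Adm p C lam '' {y | 0 < p s a y}) := by
  refine le_of_forall_pos_le_add fun η hη => ?_
  choose Φ hΦ using fun y => exists_Javg_lt (C := C) (lam := lam) (p := p) hA hη y
  obtain ⟨y, hy, hle⟩ := exists_succ_Jopt_le_Javg (C := C) hp hlam ha Φ
  have := le_csSup (s := Jopt Adm p C lam '' {y | 0 < p s a y}) (Set.toFinite _).bddAbove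
    ⟨y, hy, rfl⟩
  linarith [hΦ y]

end OneStep

section OptimalActions

variable {Adm p C lam}

theorem Jopt_le_of_lt_add_xi1 {u v : S}
    (h : Jopt Adm p C lam v < Jopt Adm p C lam u + xi1 Adm p C lam) :
    Jopt Adm p C lam v ≤ Jopt Adm p C lam u := by
  by_contra! huv
  have hgap : xi1 Adm p C lam ≤ Jopt Adm p C lam v - Jopt Adm p C lam u := by
    rw [xi1, if_neg fun hconst => huv.ne (hconst u v)]
    refine csInf_le ⟨0, ?_⟩ ⟨u, v, huv, rfl⟩
    rintro d ⟨u', v', h', rfl⟩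
    exact sub_nonneg.2 h'.le
  linarith

omit [Fintype S] [Fintype A] in
theorem mem_Bg_of_le {g : S → ℝ} {s : S} {a : A} (ha : a ∈ Adm s) (hsucc : ∃ y, 0 < p s a y)
    (hle : ∀ y, 0 < p s a y → g y ≤ g s) (hge : g s ≤ sSup (g '' {y | 0 < p s a y})) :
    a ∈ Bg Adm p g s := by
  obtain ⟨y, hy⟩ := hsucc
  refine ⟨ha, hge.antisymm (csSup_le ⟨g y, y, hy, rfl⟩ ?_)⟩
  rintro _ ⟨z, hz, rfl⟩
  exact hle z hz

theorem Bg_Jopt_nonempty (hp : IsStochastic Adm p) (hlam : 0 < lam)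
    (hA : ∀ x, (Adm x).Nonempty) (hξ : 0 < xi1 Adm p C lam) (s : S) :
    (Bg Adm p (Jopt Adm p C lam) s).Nonempty := by
  obtain ⟨π, hπ⟩ := exists_Javg_lt hA hξ s
  obtain ⟨a, -, hπa⟩ :=
    Finset.exists_ne_zero_of_sum_ne_zero ((π.sum_one [] s).symm ▸ one_ne_zero)
  have ha := π.mem_of_toFun_ne_zero hπa
  refine ⟨a, mem_Bg_of_le ha (hp.exists_pos ha) (fun y hy => ?_)
    (Jopt_le_sSup_succ hp hlam hA ha)⟩
  refine Jopt_le_of_lt_add_xi1 (lt_of_le_of_lt ?_ hπ)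
  exact (Jopt_le_Javg hp hlam _ y).trans (Javg_shiftPolicy_le hp hlam π (mul_ne_zero hπa hy.ne'))

variable (hp : IsStochastic Adm p) (hlam : 0 < lam) {x : S}
  (hx : Jopt Adm p C lam x = ⨅ y, Jopt Adm p C lam y) {ε : ℝ} (hε : ε < xi1 Adm p C lam)
  {π : Policy S A Adm} (hopt : EpsOptimalAt Adm p C lam π x ε)
include hp hlam hx hε hopt

theorem Jopt_lastState_eq {l : List (A × S)} (hl : pathProb Adm p π x l ≠ 0) :
    Jopt Adm p C lam (lastState x l) = Jopt Adm p C lam x := by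
  refine (Jopt_le_of_lt_add_xi1 ?_).antisymm (hx ▸ ciInf_le (Set.finite_range _).bddBelow _)
  calc Jopt Adm p C lam (lastState x l)
      ≤ Javg Adm p C lam (shiftPolicy Adm π (histOf x l)) (lastState x l) :=
        Jopt_le_Javg hp hlam _ _
    _ ≤ Javg Adm p C lam π x := Javg_shiftPolicy_histOf_le hp hlam π x hl
    _ ≤ Jopt Adm p C lam x + ε := hopt
    _ < Jopt Adm p C lam x + xi1 Adm p C lam := by linarith

theorem mem_Bg_Jopt_of_isReachable {h : List (S × A)} {s : S} {a : A}
    (hR : IsReachable Adm p π x h s) (ha : π.toFun h s a ≠ 0) :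
    a ∈ Bg Adm p (Jopt Adm p C lam) s := by
  obtain ⟨l, rfl, rfl, hl⟩ := hR
  have haAdm := π.mem_of_toFun_ne_zero ha
  have hsucc (y : S) (hy : 0 < p (lastState x l) a y) :
      Jopt Adm p C lam y = Jopt Adm p C lam (lastState x l) := by
    have hly : pathProb Adm p π x (l ++ [(a, y)]) ≠ 0 := by
      rw [pathProb_concat]
      exact mul_ne_zero hl (mul_ne_zero ha hy.ne')
    have hJy := Jopt_lastState_eq hp hlam hx hε hopt hly
    rw [lastState_concat] at hJy
    rw [hJy, Jopt_lastState_eq hp hlam hx hε hopt hl]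
  obtain ⟨y, hy⟩ := hp.exists_pos haAdm
  exact mem_Bg_of_le haAdm ⟨y, hy⟩ (fun y hy => (hsucc y hy).le)
    ((hsucc y hy).ge.trans (le_csSup (Set.toFinite _).bddAbove ⟨y, hy, rfl⟩))

end OptimalActions

section Modification

variable {Adm p C lam}

noncomputable def Policy.piecewise (R : List (S × A) → S → Prop) (π σ : Policy S A Adm) :
    Policy S A Adm where
  toFun h s := if R h s then π.toFun h s else σ.toFun h s
  nonneg h s a := by split_ifs <;> simp [π.nonneg, σ.nonneg]
  sum_one h s := by split_ifs <;> simp [π.sum_one, σ.sum_one]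
  supp h s a ha := by split_ifs <;> simp [π.supp h s a ha, σ.supp h s a ha]

theorem pathProb_piecewise_isReachable (π σ : Policy S A Adm) (x : S) (l : List (A × S)) :
    pathProb Adm p (Policy.piecewise (IsReachable Adm p π x) π σ) x l =
      pathProb Adm p π x l := by
  have hstart : IsReachable Adm p π x [] x := ⟨[], rfl, rfl, by simp [pathProb, pathProbAux]⟩
  refine (pathProbAux_congr (IsReachable Adm p π x) ?_ ?_ hstart l).symm
  · rintro _ _ a y ⟨l, rfl, rfl, hl⟩ hay
    refine ⟨l ++ [(a, y)], histOf_concat x l (a, y), lastState_concat x l (a, y), ?_⟩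
    rw [pathProb_concat]
    exact mul_ne_zero hl hay
  · intro h s hR
    simp [Policy.piecewise, hR]

theorem cylProb_eq_one_of_forall (hp : IsStochastic Adm p) (π : Policy S A Adm) (x : S)
    {n : ℕ} {E : (Fin n → A × S) → Prop}
    (hE : ∀ v, pathProb Adm p π x (List.ofFn v) ≠ 0 → E v) :
    cylProb Adm p π x n E = 1 := by
  rw [cylProb, ← sum_pathProb_eq_one hp π x n]
  refine Finset.sum_congr rfl fun v _ => ?_
  by_cases hv : pathProb Adm p π x (List.ofFn v) = 0
  · simp [hv]
  · simp [hE v hv]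

theorem mem_Pstar_of_toFun_ne_zero (hp : IsStochastic Adm p) (π : Policy S A Adm)
    (hπ : ∀ h s a, π.toFun h s a ≠ 0 → a ∈ Bg Adm p (Jopt Adm p C lam) s) :
    π ∈ Pstar Adm p C lam := by
  intro x t
  refine cylProb_eq_one_of_forall hp π x fun v hv => ?_
  rw [List.ofFn_succ', List.concat_eq_append] at hv ⊢
  rw [stateAt_append_of_length_eq x (List.length_ofFn)]
  rw [pathProb_concat] at hv
  exact hπ _ _ _ (left_ne_zero_of_mul (right_ne_zero_of_mul hv))

end Modification

theorem exists_Pstar_policy_same_law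
    (hA : ∀ x, (Adm x).Nonempty)
    (hp : ∀ (x : S), ∀ a ∈ Adm x, (∀ y, 0 ≤ p x a y) ∧ (∑ y, p x a y) = 1)
    (hlam : 0 < lam) (α : ℝ)
    (β : ℝ)
    (x : S) (hx : Jopt Adm p C lam x = ⨅ y : S, Jopt Adm p C lam y)
    (ε : ℝ) (hε : ε ∈ Set.Ioo 0 (xi Adm p C lam α β))
    (π : Policy S A Adm) (hopt : EpsOptimalAt Adm p C lam π x ε) :
    ∃ δ ∈ Pstar Adm p C lam,
      ∀ l : List (A × S), pathProb Adm p π x l = pathProb Adm p δ x l := by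
  have hξ : ε < xi1 Adm p C lam := hε.2.trans_le (min_le_right _ _)
  choose f hf using Bg_Jopt_nonempty hp hlam hA (hε.1.trans hξ)
  let σ := stationary Adm f fun s => (hf s).1
  refine ⟨Policy.piecewise (IsReachable Adm p π x) π σ, mem_Pstar_of_toFun_ne_zero hp _ ?_,
    fun l => (pathProb_piecewise_isReachable π σ x l).symm⟩
  intro h s a ha
  by_cases hR : IsReachable Adm p π x h s
  · simp only [Policy.piecewise, if_pos hR] at ha
    exact mem_Bg_Jopt_of_isReachable hp hlam hx hξ hopt hR ha
  · simp only [Policy.piecewise, if_neg hR, σ, stationary, ne_eq, ite_eq_right_iff,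
      one_ne_zero, imp_false, not_not] at ha
    exact ha ▸ hf s

end RiskSensitive
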